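/- arXiv:1404.5505 — 2 statements merged into one kernel-verified Lean document; each statement's English description precedes it below -/
import Mathlib

section
/- There exists an absolute constant C > 0 such that for all 0 < α ≤ 1, λ > 0, and μ > 0, Σ_{j=1}^∞ j^{−α/2} e^{−(λ j^α + μ j^{−α})/α} ≤ C · e^{Cλ} · α^{−1} · ( e^{−√(1+4λμ)} · (1 + √(1+4λμ)) / (2λ) )^{1/α}. -/
lemma phi_ge (lam mu u : ℝ) (hl : 0 < lam) (hm : 0 < mu) (hu : 0 < u) :
    Real.sqrt (1 + 4*lam*mu) - Real.log ((1 + Real.sqrt (1 + 4*lam*mu)) / (2*lam))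
      ≤ lam*u + mu/u - Real.log u := by
  set s := Real.sqrt (1 + 4*lam*mu) with hsdef
  have hs2 : s^2 = 1 + 4*lam*mu := Real.sq_sqrt (by nlinarith)
  have hs0 : 0 ≤ s := Real.sqrt_nonneg _
  have hs1 : 1 < s := by nlinarith
  have hust : 0 < (1 + s) / (2*lam) := by positivity
  have hlog : Real.log u - Real.log ((1+s)/(2*lam)) ≤ u / ((1+s)/(2*lam)) - 1 := by
    have h := Real.log_le_sub_one_of_pos (show 0 < u / ((1+s)/(2*lam)) by positivity)
    rwa [Real.log_div (ne_of_gt hu) (ne_of_gt hust)] at h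
  have hdiv : u / ((1+s)/(2*lam)) = 2*lam*u/(1+s) := by
    rw [div_div_eq_mul_div]; ring_nf
  rw [hdiv] at hlog
  have h4 : 0 < 4*lam*(s-1) := by nlinarith
  have hkey : 4*lam*(s-1) * (lam*(s-1)*u^2 - 4*lam*mu*u + mu*(1+s))
      = (2*lam*(s-1)*u - 4*lam*mu)^2 := by linear_combination (4*lam*mu) * hs2
  have hE : 0 ≤ lam*(s-1)*u^2 - 4*lam*mu*u + mu*(1+s) := by
    nlinarith [sq_nonneg (2*lam*(s-1)*u - 4*lam*mu), hkey, h4]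
  have hid : lam*u + mu/u + 1 - (s + 2*lam*u/(1+s))
      = (lam*(s-1)*u^2 - 4*lam*mu*u + mu*(1+s)) / (u*(1+s)) := by
    field_simp
    nlinarith [hs2, hu, hs1]
  have hmain : s + 2*lam*u/(1+s) ≤ lam*u + mu/u + 1 := by
    have : 0 ≤ (lam*(s-1)*u^2 - 4*lam*mu*u + mu*(1+s)) / (u*(1+s)) := by positivity
    linarith [hid ▸ this]
  linarith

lemma step_ineq (q : ℝ) (hq : 0 < q) (n : ℕ) (hn : 1 ≤ n) :
    q * ((n:ℝ)+1) ^ (-(1+q)) ≤ (n:ℝ)^(-q) - ((n:ℝ)+1)^(-q) := by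
  set a : ℝ := (n:ℝ) with ha
  have ha1 : (1:ℝ) ≤ a := by rw [ha]; exact_mod_cast hn
  have ha0 : 0 < a := by linarith
  have hb0 : 0 < a + 1 := by linarith
  have hlog : 1/(a+1) ≤ Real.log (a+1) - Real.log a := by
    have h := Real.log_le_sub_one_of_pos (show 0 < a/(a+1) by positivity)
    rw [Real.log_div (ne_of_gt ha0) (ne_of_gt hb0)] at h
    have : a/(a+1) - 1 = -(1/(a+1)) := by field_simp; ring
    linarith [this ▸ h]
  have hratio : 1 + q/(a+1) ≤ (a+1)^q * a^(-q) := by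
    have h1 : (a+1)^q * a^(-q) = Real.exp (q * (Real.log (a+1) - Real.log a)) := by
      rw [Real.rpow_def_of_pos hb0, Real.rpow_def_of_pos ha0, ← Real.exp_add]
      ring_nf
    rw [h1]
    have h2 := Real.add_one_le_exp (q * (Real.log (a+1) - Real.log a))
    have h3 : q/(a+1) ≤ q * (Real.log (a+1) - Real.log a) := by
      rw [div_eq_mul_inv, mul_comm q]
      have := mul_le_mul_of_nonneg_right hlog hq.le
      calc (a+1)⁻¹ * q = 1/(a+1) * q := by rw [one_div]
        _ ≤ (Real.log (a+1) - Real.log a) * q := this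
        _ = q * (Real.log (a+1) - Real.log a) := by ring
    linarith
  -- multiply by (a+1)^(-q) > 0
  have hbq : (0:ℝ) < (a+1)^(-q) := Real.rpow_pos_of_pos hb0 _
  have hmul := mul_le_mul_of_nonneg_right hratio hbq.le
  have e1 : (a+1)^q * a^(-q) * (a+1)^(-q) = a^(-q) := by
    rw [mul_comm ((a+1)^q), mul_assoc, ← Real.rpow_add hb0]
    simp
  have e2 : (1 + q/(a+1)) * (a+1)^(-q) = (a+1)^(-q) + q * ((a+1)^(-(1+q))) := by
    have : (a+1)^(-(1+q)) = (a+1)^(-q) * (a+1)⁻¹ := by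
      rw [← Real.rpow_neg_one (a+1), ← Real.rpow_add hb0]; ring_nf
    rw [this]; field_simp
  rw [e1, e2] at hmul
  linarith

lemma partial_sum_le (q : ℝ) (hq : 0 < q) (N : ℕ) :
    ∑ j ∈ Finset.range N, ((j:ℝ)+1)^(-(1+q)) ≤ 1 + (1/q) * (1 - (N:ℝ)^(-q)) := by
  induction N with
  | zero =>
      rw [Finset.sum_range_zero, Nat.cast_zero, Real.zero_rpow (neg_ne_zero.mpr hq.ne')]
      have h1 : 0 < 1/q := by positivity
      nlinarith
  | succ N ih =>
      rw [Finset.sum_range_succ]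
      rcases Nat.eq_zero_or_pos N with h0 | hN
      · subst h0; simp
      · have hstep := step_ineq q hq N hN
        have : ((N:ℝ)+1)^(-(1+q)) ≤ (1/q) * ((N:ℝ)^(-q) - ((N:ℝ)+1)^(-q)) := by
          have := mul_le_mul_of_nonneg_left hstep (le_of_lt (one_div_pos.mpr hq))
          calc ((N:ℝ)+1)^(-(1+q)) = (1/q) * (q * ((N:ℝ)+1)^(-(1+q))) := by field_simp
            _ ≤ (1/q) * ((N:ℝ)^(-q) - ((N:ℝ)+1)^(-q)) := this
        push_cast
        linarith

lemma summable_zeta (q : ℝ) (hq : 0 < q) : Summable (fun j : ℕ => ((j:ℝ)+1)^(-(1+q))) := by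
  have h : Summable (fun n : ℕ => (n:ℝ)^(-(1+q))) :=
    Real.summable_nat_rpow.mpr (by linarith)
  have h2 := (summable_nat_add_iff 1).mpr h
  refine h2.congr fun n => ?_
  push_cast
  rfl

lemma tsum_zeta_le (q : ℝ) (hq : 0 < q) :
    (∑' j : ℕ, ((j:ℝ)+1)^(-(1+q))) ≤ 1 + 1/q := by
  refine Summable.tsum_le_of_sum_le (summable_zeta q hq) fun fs => ?_
  obtain ⟨N, hN⟩ := fs.exists_nat_subset_range
  have h1 : ∑ j ∈ fs, ((j:ℝ)+1)^(-(1+q)) ≤ ∑ j ∈ Finset.range N, ((j:ℝ)+1)^(-(1+q)) :=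
    Finset.sum_le_sum_of_subset_of_nonneg hN fun i _ _ => by positivity
  have h2 := partial_sum_le q hq N
  have h3 : (0:ℝ) ≤ (N:ℝ)^(-q) := by positivity
  have h4 : 0 < 1/q := by positivity
  nlinarith

theorem statement_13 :
    ∃ C : ℝ, 0 < C ∧
      ∀ (α lam mu : ℝ), 0 < α → α ≤ 1 → 0 < lam → 0 < mu →
        (∑' j : ℕ, ((j : ℝ) + 1) ^ (-(α / 2))
            * Real.exp (-(lam * ((j : ℝ) + 1) ^ α + mu * ((j : ℝ) + 1) ^ (-α)) / α))
          ≤ C * Real.exp (C * lam) * α⁻¹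
              * (Real.exp (-Real.sqrt (1 + 4 * lam * mu))
                  * (1 + Real.sqrt (1 + 4 * lam * mu)) / (2 * lam)) ^ (1 / α) := by
  refine ⟨3, by norm_num, fun α lam mu hα hα1 hl hm => ?_⟩
  set s := Real.sqrt (1 + 4*lam*mu) with hsdef
  have hs2 : s^2 = 1 + 4*lam*mu := Real.sq_sqrt (by nlinarith)
  have hs0 : 0 ≤ s := Real.sqrt_nonneg _
  have hs1 : 1 < s := by nlinarith
  have hust : 0 < (1 + s) / (2*lam) := by positivity
  set H := s - Real.log ((1+s)/(2*lam)) with hHdef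
  have hbase : Real.exp (-s) * (1+s) / (2*lam) = Real.exp (-H) := by
    rw [hHdef, neg_sub, Real.exp_sub, Real.exp_log hust, Real.exp_neg]
    field_simp
  have hrpow : (Real.exp (-s) * (1+s) / (2*lam)) ^ (1/α) = Real.exp (-H/α) := by
    rw [hbase, Real.rpow_def_of_pos (Real.exp_pos _), Real.log_exp, mul_one_div, neg_div]
  have hterm : ∀ j : ℕ, ((j:ℝ)+1)^(-(α/2)) * Real.exp (-(lam*((j:ℝ)+1)^α + mu*((j:ℝ)+1)^(-α))/α)
      ≤ Real.exp (-H/α) * ((j:ℝ)+1)^(-(1+α/2)) := by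
    intro j
    set n : ℝ := (j:ℝ)+1 with hn
    have hn0 : 0 < n := by positivity
    have hu : 0 < n^α := Real.rpow_pos_of_pos hn0 α
    have hphi := phi_ge lam mu (n^α) hl hm hu
    rw [← hsdef, ← hHdef] at hphi
    have hinv : mu / n^α = mu * n^(-α) := by
      rw [Real.rpow_neg hn0.le, div_eq_mul_inv]
    have hlogn : Real.log (n^α) = α * Real.log n := Real.log_rpow hn0 α
    rw [hinv, hlogn] at hphi
    have h2 : (-(lam*n^α + mu*n^(-α)))/α ≤ (-H - α*Real.log n)/α :=
      (div_le_div_iff_of_pos_right hα).mpr (by linarith)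
    have h3 : (-H - α*Real.log n)/α = -H/α - Real.log n := by
      field_simp
    have hexp : Real.exp (-(lam*n^α + mu*n^(-α))/α) ≤ Real.exp (-H/α) * n⁻¹ := by
      have h4 := Real.exp_le_exp.mpr (h3 ▸ h2)
      rwa [Real.exp_sub, Real.exp_log hn0, div_eq_mul_inv] at h4
    have hpow0 : (0:ℝ) ≤ n^(-(α/2)) := (Real.rpow_pos_of_pos hn0 _).le
    calc n^(-(α/2)) * Real.exp (-(lam*n^α + mu*n^(-α))/α)
        ≤ n^(-(α/2)) * (Real.exp (-H/α) * n⁻¹) := mul_le_mul_of_nonneg_left hexp hpow0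
      _ = Real.exp (-H/α) * (n^(-(α/2)) * n⁻¹) := by ring
      _ = Real.exp (-H/α) * n^(-(1+α/2)) := by
          rw [← Real.rpow_neg_one n, ← Real.rpow_add hn0]
          congr 1
          ring
  have hq : 0 < α/2 := by positivity
  have hg : Summable (fun j : ℕ => Real.exp (-H/α) * ((j:ℝ)+1)^(-(1+α/2))) :=
    (summable_zeta (α/2) hq).mul_left _
  have hf : Summable (fun j : ℕ => ((j:ℝ)+1)^(-(α/2))
      * Real.exp (-(lam*((j:ℝ)+1)^α + mu*((j:ℝ)+1)^(-α))/α)) :=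
    Summable.of_nonneg_of_le (fun j => by positivity) hterm hg
  have h5 : (∑' j : ℕ, ((j:ℝ)+1)^(-(α/2))
        * Real.exp (-(lam*((j:ℝ)+1)^α + mu*((j:ℝ)+1)^(-α))/α))
      ≤ ∑' j : ℕ, Real.exp (-H/α) * ((j:ℝ)+1)^(-(1+α/2)) := Summable.tsum_le_tsum hterm hf hg
  have h6 : (∑' j : ℕ, Real.exp (-H/α) * ((j:ℝ)+1)^(-(1+α/2)))
      = Real.exp (-H/α) * ∑' j : ℕ, ((j:ℝ)+1)^(-(1+α/2)) := tsum_mul_left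
  have h7 := tsum_zeta_le (α/2) hq
  have hEpos : 0 < Real.exp (-H/α) := Real.exp_pos _
  have h8 : (∑' j : ℕ, ((j:ℝ)+1)^(-(1+α/2))) ≤ 3 * α⁻¹ := by
    have hi : 1 ≤ α⁻¹ := (one_le_inv₀ hα).mpr hα1
    have : 1/(α/2) = 2 * α⁻¹ := by field_simp
    rw [this] at h7
    linarith
  have hzs : 0 ≤ ∑' j : ℕ, ((j:ℝ)+1)^(-(1+α/2)) :=
    tsum_nonneg fun j => by positivity
  have h9 : 1 ≤ Real.exp (3*lam) := Real.one_le_exp (by positivity)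
  rw [hrpow]
  calc (∑' j : ℕ, ((j:ℝ)+1)^(-(α/2))
        * Real.exp (-(lam*((j:ℝ)+1)^α + mu*((j:ℝ)+1)^(-α))/α))
      ≤ Real.exp (-H/α) * ∑' j : ℕ, ((j:ℝ)+1)^(-(1+α/2)) := h6 ▸ h5
    _ ≤ Real.exp (-H/α) * (3 * α⁻¹) := mul_le_mul_of_nonneg_left h8 hEpos.le
    _ ≤ 3 * Real.exp (3*lam) * α⁻¹ * Real.exp (-H/α) := by
        nlinarith [mul_pos hEpos (show (0:ℝ) < 3 * α⁻¹ by positivity)]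
end

section
/- Let 0 < α < 2 and define r(t) = (1/2)(e^{αt/2} + e^{−αt/2} − (e^{t/2} − e^{−t/2})^α) for t ≥ 0. Then r is a nonincreasing function of t on [0, ∞), and 0 ≤ r(t) ≤ 1 for all t ≥ 0. -/
/-- The covariance function of Shao's process with parameter `α`:
`r(t) = (1/2)(e^{αt/2} + e^{−αt/2} − (e^{t/2} − e^{−t/2})^α)`. -/
noncomputable def shaoCov (α t : ℝ) : ℝ :=
  (1 / 2) * (Real.exp (α * t / 2) + Real.exp (-(α * t) / 2)
    - (Real.exp (t / 2) - Real.exp (-(t / 2))) ^ α)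

open scoped NNReal in
private lemma rpow_subadd {a b p : ℝ} (ha : 0 ≤ a) (hb : 0 ≤ b) (hp : 0 ≤ p) (hp1 : p ≤ 1) :
    (a + b) ^ p ≤ a ^ p + b ^ p := by
  have h := NNReal.rpow_add_le_add_rpow a.toNNReal b.toNNReal hp hp1
  have h2 : ((a.toNNReal + b.toNNReal : ℝ≥0) : ℝ) ^ p
      ≤ ((a.toNNReal : ℝ)) ^ p + ((b.toNNReal : ℝ)) ^ p := by exact_mod_cast h
  rwa [NNReal.coe_add, Real.coe_toNNReal a ha, Real.coe_toNNReal b hb] at h2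

private lemma key {α x : ℝ} (hα₀ : 0 < α) (hα₂ : α < 2) (hx : 1 < x) :
    x ^ α - 1 ≤ (x - 1) ^ (α - 1) * (x + 1) := by
  have hx0 : (0:ℝ) < x - 1 := by linarith
  have hx1 : (0:ℝ) < x := by linarith
  rcases le_or_gt α 1 with h1 | h1
  · have hs : x ^ α ≤ (x - 1) ^ α + 1 := by
      have h := rpow_subadd hx0.le zero_le_one hα₀.le h1
      simpa using h
    have h2 : (x - 1) ^ α = (x - 1) ^ (α - 1) * (x - 1) := by
      rw [← Real.rpow_add_one hx0.ne' (α - 1)]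
      ring_nf
    have h3 : (x - 1) ^ (α - 1) * (x - 1) ≤ (x - 1) ^ (α - 1) * (x + 1) :=
      mul_le_mul_of_nonneg_left (by linarith) (Real.rpow_nonneg hx0.le _)
    calc x ^ α - 1 ≤ (x - 1) ^ α := by linarith
      _ = (x - 1) ^ (α - 1) * (x - 1) := h2
      _ ≤ (x - 1) ^ (α - 1) * (x + 1) := h3
  · set β := α - 1 with hβ
    have hβ0 : 0 < β := by rw [hβ]; linarith
    have hβ1 : β ≤ 1 := by rw [hβ]; linarith
    have e1 : x ^ α = x ^ β * x := by
      rw [← Real.rpow_add_one hx1.ne' β]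
      norm_num [hβ]
    have e2 : x ^ β ≤ (x - 1) ^ β + 1 := by
      have h := rpow_subadd hx0.le zero_le_one hβ0.le hβ1
      simpa using h
    have e3 : (x - 1) * x ^ β ≤ (x - 1) ^ β * x := by
      have hq0 : 0 < (x - 1) / x := div_pos hx0 hx1
      have hq1 : (x - 1) / x ≤ 1 := by rw [div_le_one hx1]; linarith
      have h := Real.rpow_le_rpow_of_exponent_ge hq0 hq1 hβ1
      rw [Real.rpow_one, Real.div_rpow hx0.le hx1.le] at h
      exact (div_le_div_iff₀ hx1 (Real.rpow_pos_of_pos hx1 β)).1 h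
    rw [e1]
    nlinarith [Real.rpow_nonneg hx0.le β, Real.rpow_nonneg hx1.le β]

private lemma key2 {α t : ℝ} (hα₀ : 0 < α) (hα₂ : α < 2) (ht : 0 < t) :
    Real.exp (α * t / 2) - Real.exp (-(α * t) / 2) ≤
      (Real.exp (t / 2) - Real.exp (-(t / 2))) ^ (α - 1) *
        (Real.exp (t / 2) + Real.exp (-(t / 2))) := by
  have hx : 1 < Real.exp t := by
    have := Real.exp_lt_exp.2 ht
    simpa using this
  have hX1 : (0:ℝ) ≤ Real.exp t - 1 := by linarith
  have h := key hα₀ hα₂ hx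
  have main := mul_le_mul_of_nonneg_left h (Real.exp_pos (-(α * t) / 2)).le
  have l1 : Real.exp (-(α * t) / 2) * (Real.exp t ^ α - 1)
      = Real.exp (α * t / 2) - Real.exp (-(α * t) / 2) := by
    rw [← Real.exp_mul, mul_sub, ← Real.exp_add, mul_one,
      show -(α * t) / 2 + t * α = α * t / 2 by ring]
  have b : Real.exp (t / 2) - Real.exp (-(t / 2))
      = Real.exp (-(t / 2)) * (Real.exp t - 1) := by
    rw [mul_sub, ← Real.exp_add, mul_one, show -(t / 2) + t = t / 2 by ring]
  have c : Real.exp (t / 2) + Real.exp (-(t / 2))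
      = Real.exp (-(t / 2)) * (Real.exp t + 1) := by
    rw [mul_add, ← Real.exp_add, mul_one, show -(t / 2) + t = t / 2 by ring]
  have l2 : (Real.exp (t / 2) - Real.exp (-(t / 2))) ^ (α - 1) *
        (Real.exp (t / 2) + Real.exp (-(t / 2)))
      = Real.exp (-(α * t) / 2) * ((Real.exp t - 1) ^ (α - 1) * (Real.exp t + 1)) := by
    rw [b, c, Real.mul_rpow (Real.exp_nonneg _) hX1, ← Real.exp_mul,
      mul_mul_mul_comm, ← Real.exp_add,
      show -(t / 2) * (α - 1) + -(t / 2) = -(α * t) / 2 by ring]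
  rw [l2, ← l1]
  exact main

private lemma shaoCov_hasDerivAt (α : ℝ) {t : ℝ} (ht : 0 < t) :
    HasDerivAt (shaoCov α)
      (α / 4 * (Real.exp (α * t / 2) - Real.exp (-(α * t) / 2)
        - (Real.exp (t / 2) - Real.exp (-(t / 2))) ^ (α - 1) *
          (Real.exp (t / 2) + Real.exp (-(t / 2))))) t := by
  have hid : HasDerivAt (fun s : ℝ => s) 1 t := hasDerivAt_id t
  have ha : HasDerivAt (fun s : ℝ => α * s / 2) (α * 1 / 2) t := (hid.const_mul α).div_const 2
  have hb : HasDerivAt (fun s : ℝ => -(α * s) / 2) (-(α * 1) / 2) t :=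
    ((hid.const_mul α).neg).div_const 2
  have hc : HasDerivAt (fun s : ℝ => s / 2) (1 / 2) t := hid.div_const 2
  have hd : HasDerivAt (fun s : ℝ => -(s / 2)) (-(1 / 2)) t := hc.neg
  have hg : HasDerivAt (fun s : ℝ => Real.exp (s / 2) - Real.exp (-(s / 2)))
      (Real.exp (t / 2) * (1 / 2) - Real.exp (-(t / 2)) * (-(1 / 2))) t := (hc.exp).sub (hd.exp)
  have hgt : 0 < Real.exp (t / 2) - Real.exp (-(t / 2)) := by
    have : -(t / 2) < t / 2 := by linarith
    exact sub_pos.2 (Real.exp_lt_exp.2 this)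
  have hpow : HasDerivAt (fun s : ℝ => (Real.exp (s / 2) - Real.exp (-(s / 2))) ^ α)
      (α * (Real.exp (t / 2) - Real.exp (-(t / 2))) ^ (α - 1) *
        (Real.exp (t / 2) * (1 / 2) - Real.exp (-(t / 2)) * (-(1 / 2)))) t := by
    have hr := Real.hasDerivAt_rpow_const (x := Real.exp (t / 2) - Real.exp (-(t / 2)))
      (p := α) (Or.inl hgt.ne')
    exact hr.comp t hg
  have hsum := ((ha.exp.add hb.exp).sub hpow).const_mul (1 / 2 : ℝ)
  refine hsum.congr_deriv ?_
  ring

theorem statement_15 (α : ℝ) (hα₀ : 0 < α) (hα₂ : α < 2) :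
    (∀ s t : ℝ, 0 ≤ s → s ≤ t → shaoCov α t ≤ shaoCov α s) ∧
      ∀ t : ℝ, 0 ≤ t → 0 ≤ shaoCov α t ∧ shaoCov α t ≤ 1 := by
  have hrc : Continuous fun y : ℝ => y ^ α := Real.continuous_rpow_const hα₀.le
  have hcont : Continuous (shaoCov α) := by
    unfold shaoCov
    exact continuous_const.mul
      (((Real.continuous_exp.comp (by continuity)).add
        (Real.continuous_exp.comp (by continuity))).sub (hrc.comp (by continuity)))
  have hanti : AntitoneOn (shaoCov α) (Set.Ici 0) := by
    apply antitoneOn_of_deriv_nonpos (convex_Ici 0) hcont.continuousOn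
    · intro x hx
      rw [interior_Ici] at hx
      exact (shaoCov_hasDerivAt α hx).differentiableAt.differentiableWithinAt
    · intro x hx
      rw [interior_Ici] at hx
      rw [(shaoCov_hasDerivAt α hx).deriv]
      have hk := key2 hα₀ hα₂ hx
      have h4 : (0:ℝ) ≤ α / 4 := by linarith
      exact mul_nonpos_iff.2 (Or.inl ⟨h4, by linarith⟩)
  have h0 : shaoCov α 0 = 1 := by
    unfold shaoCov
    norm_num [Real.exp_zero, Real.zero_rpow hα₀.ne']
  have hlow : ∀ t : ℝ, 0 ≤ t → 0 ≤ shaoCov α t := by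
    intro t ht
    unfold shaoCov
    have hb : 0 ≤ Real.exp (t / 2) - Real.exp (-(t / 2)) :=
      sub_nonneg.2 (Real.exp_le_exp.2 (by linarith))
    have h1 : (Real.exp (t / 2) - Real.exp (-(t / 2))) ^ α ≤ Real.exp (t / 2) ^ α :=
      Real.rpow_le_rpow hb (by linarith [Real.exp_pos (-(t / 2))]) hα₀.le
    have h2 : Real.exp (t / 2) ^ α = Real.exp (α * t / 2) := by
      rw [← Real.exp_mul]
      congr 1
      ring
    rw [h2] at h1
    linarith [Real.exp_pos (-(α * t) / 2)]
  refine ⟨fun s t hs hst => hanti (Set.mem_Ici.2 hs) (Set.mem_Ici.2 (hs.trans hst)) hst,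
    fun t ht => ⟨hlow t ht, ?_⟩⟩
  calc shaoCov α t ≤ shaoCov α 0 := hanti (Set.mem_Ici.2 le_rfl) (Set.mem_Ici.2 ht) ht
    _ = 1 := h0
end
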